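/- arXiv:1609.02716 — 4 statements merged into one kernel-verified Lean document; each statement's English description precedes it below -/
import Mathlib

section
/- Let K be a finite extension of Q_p with ring of integers O, maximal ideal p, and ramification index e. For f ∈ O^× let o(f,l) denote the order of the image of f in (O/p^l)^×. Suppose f^{o(f,1)} ∈ U^(n) \ U^(n+1) where n > e/(p-1). Then for all l ≥ n, o(f,l) = o(f,1) · p^⌈(l-n)/e⌉. -/
/-!
Write `g = f ^ o(f,1)`, so `g ≡ 1 mod 𝔭` and `v(g - 1) = n`. Since `(1 + u) ^ p - 1 = p u + ⋯ + u ^ p`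
and `p` divides the middle binomial coefficients, the term `p u` strictly dominates as soon as
`(p - 1) v(u) > v(p) = e`; hence `v(g ^ p ^ j - 1) = n + j e` for all `j`. So the order of `g`
modulo `𝔭 ^ l` is `p ^ k` for the least `k` with `n + k e ≥ l`, i.e. `k = ⌈(l - n) / e⌉`,
and `o(f,l) = o(f,1) · p ^ k` because `o(f,1)` divides `o(f,l)`.
-/

open WithZero IsDedekindDomain

/-- `o(f,l)`: the order of the image of the unit `f` in `(O/𝔭^l)ˣ`. -/
noncomputable def unitOrderMod {O : Type*} [CommRing O] (P : Ideal O) (f : Oˣ) (l : ℕ) : ℕ :=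
  orderOf (Units.map (Ideal.Quotient.mk (P ^ l)).toMonoidHom f)

namespace Valuation

variable {R Γ₀ : Type*} [CommRing R] [LinearOrderedCommGroupWithZero Γ₀] (v : Valuation R Γ₀)

theorem map_natCast_le_one (n : ℕ) : v n ≤ 1 := by
  induction n with
  | zero => simp
  | succ n ih => exact (Nat.cast_succ (R := R) n ▸ v.map_add _ _).trans (max_le ih v.map_one.le)

theorem one_add_pow_sub_one_eq_sum (u : R) (p : ℕ) :
    (1 + u) ^ p - 1 = ∑ i ∈ Finset.range p, u ^ (i + 1) * (p.choose (i + 1) : R) := by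
  rw [add_comm, add_pow, Finset.sum_range_succ']
  simp

theorem map_one_add_pow_prime_sub_one {p : ℕ} (hp : p.Prime) {u : R} (hu0 : v u ≠ 0)
    (hu1 : v u < 1) (hup : v u ^ (p - 1) < v p) :
    v ((1 + u) ^ p - 1) = v p * v u := by
  have hp0 : 0 < v p := zero_le.trans_lt hup
  rw [one_add_pow_sub_one_eq_sum, v.map_sum_eq_of_lt (Finset.mem_range.2 hp.pos)]
  · simp [mul_comm]
  intro i hi
  obtain ⟨hip, hi0⟩ : i < p ∧ i ≠ 0 := by simpa using hi
  simp only [zero_add, pow_one, Nat.choose_one_right, map_mul, map_pow]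
  rcases Nat.lt_or_ge (i + 1) p with hlt | hge
  · -- `p` divides the binomial coefficient, and `u ^ 2` beats `u`
    obtain ⟨c, hc⟩ := hp.dvd_choose_self (Nat.succ_ne_zero i) hlt
    rw [hc, Nat.cast_mul, v.map_mul]
    calc v u ^ (i + 1) * (v p * v c) ≤ v u ^ 2 * v p :=
          mul_le_mul' (pow_le_pow_right_of_le_one' hu1.le (by omega))
            (mul_le_of_le_one_right' (v.map_natCast_le_one c))
      _ < v u * v p := by
          refine mul_lt_mul_of_pos_right ?_ hp0
          rw [sq]
          exact mul_lt_of_lt_one_right (zero_lt_iff.2 hu0) hu1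
  · obtain rfl : i + 1 = p := by omega
    rw [Nat.add_sub_cancel] at hup
    rw [Nat.choose_self, Nat.cast_one, v.map_one, mul_one, pow_succ, mul_comm (v u)]
    exact mul_lt_mul_of_pos_right hup (zero_lt_iff.2 hu0)

theorem map_pow_prime_pow_sub_one {p : ℕ} (hp : p.Prime) {x : R} (hx0 : v (x - 1) ≠ 0)
    (hx1 : v (x - 1) < 1) (hxp : v (x - 1) ^ (p - 1) < v p) (j : ℕ) :
    v (x ^ p ^ j - 1) = v p ^ j * v (x - 1) := by
  induction j with
  | zero => simp
  | succ j ih =>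
    have hp1 : v p ^ j * v (x - 1) ≤ v (x - 1) :=
      mul_le_of_le_one_left' (Right.pow_le_one_of_le (v.map_natCast_le_one p))
    have hp0 : v p ≠ 0 := (zero_le.trans_lt hxp).ne'
    rw [pow_succ, pow_mul, ← add_sub_cancel (1 : R) (x ^ p ^ j),
      v.map_one_add_pow_prime_sub_one hp, ih, pow_succ', mul_assoc]
    · rw [ih]; exact mul_ne_zero (pow_ne_zero j hp0) hx0
    · rw [ih]; exact hp1.trans_lt hx1
    · rw [ih]; exact (pow_le_pow_left₀ zero_le hp1 _).trans_lt hxp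

theorem map_pow_prime_pow_sub_one_eq_exp {v : Valuation R ℤᵐ⁰} {p e n : ℕ} (hp : p.Prime)
    {x : R} (hpe : v p = exp (-(e : ℤ))) (hx : v (x - 1) = exp (-(n : ℤ)))
    (hen : e < (p - 1) * n) (j : ℕ) :
    v (x ^ p ^ j - 1) = exp (-((n + j * e : ℕ) : ℤ)) := by
  have hn0 : 0 < n := Nat.pos_of_ne_zero (by rintro rfl; simp at hen)
  rw [v.map_pow_prime_pow_sub_one hp, hx, hpe, ← exp_nsmul, ← exp_add]
  · congr 1; push_cast; ring
  · rw [hx]; exact exp_ne_zero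
  · rw [hx, ← exp_zero, exp_lt_exp, Left.neg_neg_iff, Nat.cast_pos]
    exact hn0
  · rw [hx, hpe, ← exp_nsmul, exp_lt_exp, nsmul_eq_mul, mul_neg, neg_lt_neg_iff]
    exact_mod_cast hen

end Valuation

theorem orderOf_eq_prime_pow_of_forall {G : Type*} [Monoid G] {p : ℕ} [Fact p.Prime] {x : G}
    {k : ℕ} (h : ∀ j, x ^ p ^ j = 1 ↔ k ≤ j) : orderOf x = p ^ k := by
  cases k with
  | zero => simpa using (h 0).2 le_rfl
  | succ k => exact orderOf_eq_prime_pow (by simp [h]) ((h _).2 le_rfl)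

theorem orderOf_eq_mul_orderOf_pow {G : Type*} [Monoid G] {x : G} {m : ℕ} (hm : m ≠ 0)
    (h : m ∣ orderOf x) : orderOf x = m * orderOf (x ^ m) := by
  rw [orderOf_pow_of_dvd hm h, Nat.mul_div_cancel' h]

theorem Ideal.Quotient.unitsMap_mk_eq_one_iff {R : Type*} [CommRing R] {I : Ideal R} {u : Rˣ} :
    Units.map (Ideal.Quotient.mk I).toMonoidHom u = 1 ↔ (u : R) - 1 ∈ I := by
  rw [Units.ext_iff, Units.coe_map, Units.val_one, ← map_one (Ideal.Quotient.mk I)]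
  exact Ideal.Quotient.eq

namespace IsDedekindDomain.HeightOneSpectrum

variable {R : Type*} [CommRing R] [IsDedekindDomain R] (v : HeightOneSpectrum R)

theorem intValuation_eq_exp_of_mem_of_notMem {r : R} {s : ℕ} (hs : r ∈ v.asIdeal ^ s)
    (hs' : r ∉ v.asIdeal ^ (s + 1)) : v.intValuation r = exp (-(s : ℤ)) := by
  refine le_antisymm ((v.intValuation_le_pow_iff_mem r s).2 hs) ?_
  rw [← v.intValuation_le_pow_iff_mem, v.intValuation_le_exp_iff_le_emultiplicity,
    Nat.cast_add, Nat.cast_one, not_le, ENat.lt_natCast_add_one_iff] at hs'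
  exact v.exp_le_intValuation_iff_emultiplicity_le.2 hs'

theorem intValuation_eq_exp_of_span_eq_pow {r : R} {e : ℕ}
    (hr : Ideal.span {r} = v.asIdeal ^ e) : v.intValuation r = exp (-(e : ℤ)) := by
  refine v.intValuation_eq_exp_of_mem_of_notMem (hr ▸ Ideal.mem_span_singleton_self r) fun h => ?_
  have hle : v.asIdeal ^ e ≤ v.asIdeal ^ (e + 1) := hr ▸ (Ideal.span_singleton_le_iff_mem _).2 h
  exact (Ideal.pow_right_strictAnti _ v.ne_bot v.isPrime.ne_top e.lt_succ_self).not_ge hle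

theorem orderOf_unitsMap_mk_eq_prime_pow {p : ℕ} [Fact p.Prime] {g : Rˣ} {e n : ℕ} (he0 : 0 < e)
    (hg : ∀ j, v.intValuation ((g : R) ^ p ^ j - 1) = exp (-((n + j * e : ℕ) : ℤ))) (l : ℕ) :
    orderOf (Units.map (Ideal.Quotient.mk (v.asIdeal ^ l)).toMonoidHom g) =
      p ^ ((l - n + e - 1) / e) := by
  refine orderOf_eq_prime_pow_of_forall fun j => ?_
  rw [← map_pow, Ideal.Quotient.unitsMap_mk_eq_one_iff, Units.val_pow_eq_pow_val,
    ← v.intValuation_le_pow_iff_mem, hg, exp_le_exp, neg_le_neg_iff, Nat.cast_le,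
    Nat.div_le_iff_le_mul_add_pred he0, mul_comm e]
  omega

end IsDedekindDomain.HeightOneSpectrum

theorem unitOrderMod_dvd_of_le {O : Type*} [CommRing O] (P : Ideal O) (f : Oˣ) {k l : ℕ}
    (hkl : k ≤ l) : unitOrderMod P f k ∣ unitOrderMod P f l := by
  have hle : P ^ l ≤ P ^ k := Ideal.pow_le_pow_right hkl
  have hfactor : Units.map (Ideal.Quotient.factor hle).toMonoidHom
      (Units.map (Ideal.Quotient.mk (P ^ l)).toMonoidHom f) =
      Units.map (Ideal.Quotient.mk (P ^ k)).toMonoidHom f :=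
    Units.ext (Ideal.Quotient.factor_mk hle _)
  unfold unitOrderMod
  rw [← hfactor]
  exact orderOf_map_dvd _ _

/-- Let `K` be a finite extension of `ℚ_p` with ring of integers `O`,
maximal ideal `𝔭` and ramification index `e`.  For `f ∈ Oˣ` let `o(f,l)` be the order
of `f` in `(O/𝔭^l)ˣ`.  If `f^(o(f,1)) ∈ U^(n) \ U^(n+1)` with `n > e/(p-1)`, then for
all `l ≥ n` one has `o(f,l) = o(f,1) · p^⌈(l-n)/e⌉`. -/
theorem unit_order_growth
    (p : ℕ) [Fact p.Prime] (K : Type*) [Field K] [Algebra ℚ_[p] K]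
    [FiniteDimensional ℚ_[p] K] [Algebra ℤ_[p] K] [IsScalarTower ℤ_[p] ℚ_[p] K]
    (O : Subalgebra ℤ_[p] K) (hO : O = integralClosure ℤ_[p] K)
    (P : Ideal O) (hP : P.IsMaximal)
    (e : ℕ) (he : Ideal.span {(p : O)} = P ^ e) (he0 : 0 < e)
    (n : ℕ) (hn : (e : ℚ) / (p - 1) < n)
    (f : Oˣ)
    (hfn : ((f ^ unitOrderMod P f 1 : Oˣ) : O) - 1 ∈ P ^ n)
    (hfn' : ((f ^ unitOrderMod P f 1 : Oˣ) : O) - 1 ∉ P ^ (n + 1)) :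
    ∀ l : ℕ, n ≤ l →
      unitOrderMod P f l = unitOrderMod P f 1 * p ^ ((l - n + e - 1) / e) := by
  subst hO
  have hp : p.Prime := Fact.out
  have := integralClosure.isDedekindDomain ℤ_[p] ℚ_[p] K
  have : CharZero K := charZero_of_injective_algebraMap (algebraMap ℚ_[p] K).injective
  have hP0 : P ≠ ⊥ := by
    rintro rfl
    rw [← Ideal.zero_eq_bot, zero_pow he0.ne', Ideal.zero_eq_bot,
      Ideal.span_singleton_eq_bot] at he
    exact Nat.cast_ne_zero.2 hp.ne_zero he
  let v : HeightOneSpectrum (integralClosure ℤ_[p] K) := ⟨P, hP.isPrime, hP0⟩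
  have hen : e < (p - 1) * n := by
    have := (div_lt_iff₀ (by simpa using hp.one_lt : (0 : ℚ) < p - 1)).1 hn
    rw [← Nat.cast_pred hp.pos] at this
    exact_mod_cast (by linarith : (e : ℚ) < (p - 1 : ℕ) * n)
  have hg (j : ℕ) := v.intValuation.map_pow_prime_pow_sub_one_eq_exp hp
    (v.intValuation_eq_exp_of_span_eq_pow he) (v.intValuation_eq_exp_of_mem_of_notMem hfn hfn')
    hen j
  have hm0 : unitOrderMod P f 1 ≠ 0 := fun hm => hfn' (by simp [hm])
  intro l hl
  have hl1 : 1 ≤ l := (Nat.pos_of_ne_zero (by rintro rfl; simp at hen)).trans_le hl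
  rw [unitOrderMod, orderOf_eq_mul_orderOf_pow hm0 (unitOrderMod_dvd_of_le P f hl1), ← map_pow,
    v.orderOf_unitsMap_mk_eq_prime_pow he0 (by simpa only [Units.val_pow_eq_pow_val] using hg)]
end

section
/- Let L be a q-elementary nondegenerate integral lattice (q prime) and f ∈ O(L) an isometry. Then the characteristic polynomial of the induced map f̄ on the discriminant group A_L = L^∨/L (an F_q-vector space) divides the reduction modulo q of the characteristic polynomial of f on L. -/
variable {V : Type*} [AddCommGroup V] [Module ℚ V]

/-- The dual lattice of a `ℤ`-lattice `L` in a rational quadratic space `(V, B)`: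
all vectors pairing integrally with every element of `L`. -/
def dualLattice (B : V →ₗ[ℚ] V →ₗ[ℚ] ℚ) (L : Submodule ℤ V) : Submodule ℤ V where
  carrier := {v | ∀ x ∈ L, ∃ m : ℤ, B v x = m}
  zero_mem' := fun x _ => ⟨0, by simp⟩
  add_mem' := by
    intro a b ha hb x hx
    obtain ⟨m, hm⟩ := ha x hx
    obtain ⟨k, hk⟩ := hb x hx
    exact ⟨m + k, by simp [hm, hk]⟩
  smul_mem' := by
    intro c v hv x hx
    obtain ⟨m, hm⟩ := hv x hx
    refine ⟨c * m, ?_⟩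
    have : B (c • v) = c • B v := map_zsmul B c v
    rw [this]
    simp [hm]

/-!
The dual lattice `L^∨` lies between `L` and `q⁻¹ L`, so it is a free `ℤ`-module of full rank
preserved by `f`; the characteristic polynomials of `f` on `L` and on `L^∨` are then both the
rational characteristic polynomial of `f`. Reducing mod `q`, `A_L` is a quotient of
`𝔽_q ⊗ L^∨ = L^∨/qL^∨` compatibly with `f`, and the characteristic polynomial of the map induced
on a quotient divides the original one: after splitting off a complement of the kernel, the
matrix is block triangular.
-/

open Module Submodule LinearMap TensorProduct

theorem LinearMap.charpoly_dvd_of_snd_eq {R M N : Type*} [CommRing R] [AddCommGroup M]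
    [Module R M] [AddCommGroup N] [Module R N] [Module.Free R M] [Module.Finite R M]
    [Module.Free R N] [Module.Finite R N] (φ : Module.End R (M × N)) (ψ : Module.End R N)
    (h : ∀ x, (φ x).2 = ψ x.2) : ψ.charpoly ∣ φ.charpoly := by
  classical
  let bN := Free.chooseBasis R N
  let b := (Free.chooseBasis R M).prod bN
  have hblock : toMatrix b b φ = .fromBlocks (toMatrix b b φ).toBlocks₁₁
      (toMatrix b b φ).toBlocks₁₂ 0 (toMatrix bN bN ψ) := by
    ext (i | i) (j | j) <;> simp [b, toMatrix_apply, h, Matrix.toBlocks₁₁, Matrix.toBlocks₁₂]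
  rw [← charpoly_toMatrix φ b, hblock, Matrix.charpoly_fromBlocks_zero₂₁, charpoly_toMatrix]
  exact dvd_mul_left _ _

theorem LinearMap.charpoly_dvd_of_surjective {k W A : Type*} [Field k]
    [AddCommGroup W] [Module k W] [FiniteDimensional k W]
    [AddCommGroup A] [Module k A] [FiniteDimensional k A]
    (φ : Module.End k W) (ψ : Module.End k A) (p : W →ₗ[k] A)
    (hp : Function.Surjective p) (hc : ∀ w, p (φ w) = ψ (p w)) :
    ψ.charpoly ∣ φ.charpoly := by
  obtain ⟨C, hC⟩ := (ker p).exists_isCompl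
  let E : W ≃ₗ[k] ker p × A := (projectionOnto (ker p) C hC).equivProdOfSurjectiveOfIsCompl
    p (by simp) (range_eq_top.2 hp) (by simpa using hC.symm)
  have hE : ∀ w, (E w).2 = p w := fun _ => rfl
  rw [← E.charpoly_conj φ]
  refine charpoly_dvd_of_snd_eq _ _ fun x => ?_
  rw [LinearEquiv.conj_apply_apply, hE, hc, ← hE, E.apply_symm_apply]

theorem LinearMap.charpoly_dvd_map_charpoly_of_surjective {R k M A : Type*} [CommRing R]
    [Field k] [Algebra R k] [AddCommGroup M] [Module R M] [Module.Free R M] [Module.Finite R M]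
    [AddCommGroup A] [Module R A] [Module k A] [IsScalarTower R k A] [FiniteDimensional k A]
    (g : Module.End R M) (ψ : Module.End k A) (p : M →ₗ[R] A)
    (hp : Function.Surjective p) (hc : ∀ x, p (g x) = ψ (p x)) :
    ψ.charpoly ∣ g.charpoly.map (algebraMap R k) := by
  rw [← charpoly_baseChange]
  refine charpoly_dvd_of_surjective _ ψ (p.liftBaseChange k) (fun a => ?_) fun w => ?_
  · obtain ⟨x, rfl⟩ := hp a
    exact ⟨1 ⊗ₜ x, by simp⟩
  · induction w using TensorProduct.induction_on with
    | zero => simp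
    | tmul c x => simp [hc]
    | add w w' hw hw' => simp [hw, hw']

theorem Submodule.finite_of_smul_mem {R M : Type*} [CommRing R] [IsNoetherianRing R]
    [AddCommGroup M] [Module R M] [IsTorsionFree R M] {N P : Submodule R M} [Module.Finite R P]
    {c : R} (hc : IsRegular c) (h : ∀ v ∈ N, c • v ∈ P) : Module.Finite R N :=
  .of_injective ((c • N.subtype).codRestrict P fun v => h v v.2)
    fun _ _ hvw => Subtype.ext (hc.isSMulRegular (congrArg Subtype.val hvw))

namespace Module.Basis

variable {ι : Type*} {N : Submodule ℤ V}

noncomputable def ofLatticeSpanEqTop (b : Basis ι ℤ N) (hN : span ℚ (N : Set V) = ⊤) :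
    Basis ι ℚ V :=
  .mk (v := fun i => (b i : V))
    ((LinearIndependent.iff_fractionRing ℤ ℚ).1 (b.linearIndependent.map' N.subtype N.ker_subtype))
    (by
      rw [← hN]
      refine span_le.2 fun v hv => span_le_restrictScalars ℤ ℚ _ ?_
      have := apply_mem_span_image_of_mem_span N.subtype (b.mem_span ⟨v, hv⟩)
      rwa [← Set.range_comp] at this)

@[simp]
theorem ofLatticeSpanEqTop_apply (b : Basis ι ℤ N) (hN : span ℚ (N : Set V) = ⊤) (i : ι) :
    b.ofLatticeSpanEqTop hN i = b i :=
  Basis.mk_apply ..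

variable [Fintype ι] [DecidableEq ι]

theorem toMatrix_ofLatticeSpanEqTop (b : Basis ι ℤ N) (hN : span ℚ (N : Set V) = ⊤)
    (f : V →ₗ[ℚ] V) (F : Matrix ι ι ℤ) (hF : ∀ j, f (b j) = ∑ i, (F i j : ℚ) • (b i : V)) :
    LinearMap.toMatrix (b.ofLatticeSpanEqTop hN) (b.ofLatticeSpanEqTop hN) f =
      F.map (Int.castRingHom ℚ) := by
  ext i j
  have hFj : f (b.ofLatticeSpanEqTop hN j) = ∑ i, (F i j : ℚ) • b.ofLatticeSpanEqTop hN i := by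
    simpa using hF j
  rw [LinearMap.toMatrix_apply, hFj, repr_sum_self]
  simp

theorem charpoly_map_intCast_eq_charpoly [FiniteDimensional ℚ V] (b : Basis ι ℤ N)
    (hN : span ℚ (N : Set V) = ⊤) (f : V →ₗ[ℚ] V) (F : Matrix ι ι ℤ)
    (hF : ∀ j, f (b j) = ∑ i, (F i j : ℚ) • (b i : V)) :
    F.charpoly.map (Int.castRingHom ℚ) = f.charpoly := by
  rw [← Matrix.charpoly_map, ← toMatrix_ofLatticeSpanEqTop b hN f F hF, LinearMap.charpoly_toMatrix]

end Module.Basis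

theorem LinearMap.charpoly_map_intCast_eq_of_restrict [FiniteDimensional ℚ V]
    {N : Submodule ℤ V} [Module.Free ℤ N] [Module.Finite ℤ N] (hN : span ℚ (N : Set V) = ⊤)
    (f : V →ₗ[ℚ] V) (g : Module.End ℤ N) (hfg : ∀ x, (g x : V) = f x) :
    g.charpoly.map (Int.castRingHom ℚ) = f.charpoly := by
  classical
  let d := Free.chooseBasis ℤ N
  rw [← charpoly_toMatrix g d]
  refine d.charpoly_map_intCast_eq_charpoly hN f _ fun j => ?_
  simp only [← hfg, toMatrix_apply, Int.cast_smul_eq_zsmul]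
  simp_rw [← Submodule.coe_smul, ← Submodule.coe_sum, d.sum_repr]

theorem map_mem_dualLattice {B : V →ₗ[ℚ] V →ₗ[ℚ] ℚ} {L : Submodule ℤ V} {f : V →ₗ[ℚ] V}
    (hfB : ∀ x y, B (f x) (f y) = B x y) (hfL : L ≤ L.map (f.restrictScalars ℤ)) {v : V}
    (hv : v ∈ dualLattice B L) : f v ∈ dualLattice B L := by
  intro x hx
  obtain ⟨y, hy, rfl⟩ := hfL hx
  simpa [hfB] using hv y hy

theorem charpoly_discriminant_dvd_charpoly_mod_q_general
    [FiniteDimensional ℚ V]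
    (B : V →ₗ[ℚ] V →ₗ[ℚ] ℚ)
    (L : Submodule ℤ V)
    (hfull : Submodule.span ℚ (L : Set V) = ⊤)
    (hint : ∀ x ∈ L, ∀ y ∈ L, ∃ m : ℤ, B x y = m)
    -- the isometry `f`, preserving the form and the lattice
    (f : V ≃ₗ[ℚ] V) (hfB : ∀ x y, B (f x) (f y) = B x y)
    (hfL : Submodule.map (f.toLinearMap.restrictScalars ℤ) L = L)
    -- `L` is `q`-elementary
    (q : ℕ) [Fact q.Prime]
    (helem : ∀ v ∈ dualLattice B L, (q : ℤ) • v ∈ L)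
    -- the discriminant group `A_L = L^∨/L` as an `F_q`-vector space, with the induced map `f̄`
    (A : Type*) [AddCommGroup A] [Module (ZMod q) A] [Module.Finite (ZMod q) A]
    (pr : ↥(dualLattice B L) →+ A) (hpr : Function.Surjective pr)
    (fbar : A →ₗ[ZMod q] A)
    (hcompat : ∀ v w : ↥(dualLattice B L), (w : V) = f v → pr w = fbar (pr v))
    -- the matrix of `f` in a basis of `L`
    (m : ℕ) (b : Module.Basis (Fin m) ℤ L) (F : Matrix (Fin m) (Fin m) ℤ)
    (hF : ∀ j, f (b j) = ∑ i, (F i j : ℚ) • ((b i : V))) :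
    LinearMap.charpoly fbar ∣ F.charpoly.map (Int.castRingHom (ZMod q)) := by
  have : IsTorsionFree ℤ V := .trans ℚ
  have : Module.Finite ℤ L := .of_basis b
  have hq : IsRegular (q : ℤ) := .of_ne_zero (by exact_mod_cast (Fact.out : q.Prime).ne_zero)
  have : Module.Finite ℤ (dualLattice B L) := finite_of_smul_mem hq helem
  have hLdual : L ≤ dualLattice B L := fun x hx y hy => hint x hx y hy
  have hdual : span ℚ (dualLattice B L : Set V) = ⊤ := eq_top_iff.2 (hfull ▸ span_mono hLdual)
  let g : Module.End ℤ (dualLattice B L) := (f.toLinearMap.restrictScalars ℤ).restrict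
    fun _ => map_mem_dualLattice (f := f.toLinearMap) hfB hfL.ge
  have hg : g.charpoly = F.charpoly := Polynomial.map_injective _ Int.cast_injective <|
    (charpoly_map_intCast_eq_of_restrict hdual f.toLinearMap g fun _ => rfl).trans
      (b.charpoly_map_intCast_eq_charpoly hfull f.toLinearMap F hF).symm
  have hdvd := g.charpoly_dvd_map_charpoly_of_surjective fbar pr.toIntLinearMap hpr
    fun v => hcompat v (g v) rfl
  rwa [hg, algebraMap_int_eq] at hdvd

/-- Let `L` be a `q`-elementary nondegenerate integral lattice
(`q` prime) and `f` an isometry of `L`.  Then the characteristic polynomial of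
the induced `F_q`-linear map `f̄` on the discriminant group `A_L = L^∨/L`
divides the reduction mod `q` of the characteristic polynomial of `f` on `L`. -/
theorem charpoly_discriminant_dvd_charpoly_mod_q
    [FiniteDimensional ℚ V]
    (B : V →ₗ[ℚ] V →ₗ[ℚ] ℚ)
    (hsymm : ∀ x y, B x y = B y x)
    (hnd : ∀ v, (∀ w, B v w = 0) → v = 0)
    (L : Submodule ℤ V)
    (hfull : Submodule.span ℚ (L : Set V) = ⊤)
    (hint : ∀ x ∈ L, ∀ y ∈ L, ∃ m : ℤ, B x y = m)
    -- the isometry `f`, preserving the form and the lattice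
    (f : V ≃ₗ[ℚ] V) (hfB : ∀ x y, B (f x) (f y) = B x y)
    (hfL : Submodule.map (f.toLinearMap.restrictScalars ℤ) L = L)
    -- `L` is `q`-elementary
    (q : ℕ) [Fact q.Prime]
    (helem : ∀ v ∈ dualLattice B L, (q : ℤ) • v ∈ L)
    -- the discriminant group `A_L = L^∨/L` as an `F_q`-vector space, with the induced map `f̄`
    (A : Type*) [AddCommGroup A] [Module (ZMod q) A] [Module.Finite (ZMod q) A]
    (pr : ↥(dualLattice B L) →+ A) (hpr : Function.Surjective pr)
    (hker : ∀ v : ↥(dualLattice B L), pr v = 0 ↔ (v : V) ∈ L)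
    (fbar : A →ₗ[ZMod q] A)
    (hcompat : ∀ v w : ↥(dualLattice B L), (w : V) = f v → pr w = fbar (pr v))
    -- the matrix of `f` in a basis of `L`
    (m : ℕ) (b : Module.Basis (Fin m) ℤ L) (F : Matrix (Fin m) (Fin m) ℤ)
    (hF : ∀ j, f (b j) = ∑ i, (F i j : ℚ) • ((b i : V))) :
    LinearMap.charpoly fbar ∣ F.charpoly.map (Int.castRingHom (ZMod q)) :=
  charpoly_discriminant_dvd_charpoly_mod_q_general B L hfull hint f hfB hfL q helem A pr hpr fbar
    hcompat m b F hF
end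

section
/- Let M ⊕ N ↪ L be a primitive extension of nondegenerate even lattices given by a glue map φ : H_M → H_N (an anti-isometry of subgroups H_M ⊆ A_M, H_N ⊆ A_N), and let f_M ∈ O(M), f_N ∈ O(N) be isometries whose direct sum extends to an isometry of L. If χ_M and χ_N denote the characteristic polynomials of f_M and f_N, then every prime dividing the order of the glue group H = L/(M ⊕ N) divides the resultant res(χ_M, χ_N). -/
open Polynomial

/-- The Sylvester matrix of two integer polynomials. -/
def sylvesterMatrix (p q : Polynomial ℤ) :
    Matrix (Fin (p.natDegree + q.natDegree)) (Fin (p.natDegree + q.natDegree)) ℤ :=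
  Matrix.of fun i j =>
    if (i : ℕ) < q.natDegree then
      (if (i : ℕ) ≤ (j : ℕ) then p.coeff ((j : ℕ) - (i : ℕ)) else 0)
    else
      (if (i : ℕ) - q.natDegree ≤ (j : ℕ) then
        q.coeff ((j : ℕ) - ((i : ℕ) - q.natDegree)) else 0)

/-- The resultant of two integer polynomials, as the determinant of their
Sylvester matrix. -/
def resultant (p q : Polynomial ℤ) : ℤ := (sylvesterMatrix p q).det

/-!
Let `x ∈ L` with `c • x ∈ M ⊔ N` for some `c ≠ 0`, say `c • x = u + v`. Since `χ_M(f)` kills `M`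
and `N` is `f`-stable, `c • χ_M(f) x = χ_M(f) v ∈ N`, so primitivity of `N` gives
`χ_M(f) x ∈ N`; symmetrically `χ_N(f) x ∈ M`. As `res(χ_M, χ_N) = a χ_M + b χ_N` for integer
polynomials `a, b`, we get `res • x = a(f) χ_M(f) x + b(f) χ_N(f) x ∈ M ⊔ N`. Applied to an element
of prime order `r` in `L ⧸ (M ⊔ N)` (Cauchy), this gives `r ∣ res`.
-/

lemma Polynomial.ite_coeff_sub_eq_ite_le_add_natDegree {R : Type*} [Semiring R] (f : R[X])
    (a b : ℕ) :
    (if a ≤ b then f.coeff (b - a) else 0) =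
      if a ≤ b ∧ b ≤ a + f.natDegree then f.coeff (b - a) else 0 := by
  by_cases h : b ≤ a + f.natDegree
  · simp only [h, and_true]
  · rw [if_neg (show ¬(a ≤ b ∧ b ≤ a + f.natDegree) by omega), ite_eq_right_iff]
    exact fun _ => coeff_eq_zero_of_natDegree_lt (by omega)

open Matrix in
theorem resultant_eq_polynomial_resultant (p q : ℤ[X]) :
    _root_.resultant p q = Polynomial.resultant q p := by
  rw [_root_.resultant, Polynomial.resultant, ← det_reindex_self (finCongr (add_comm _ _)),
    ← det_transpose]
  congr 1
  ext i j
  induction j using Fin.addCases with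
  | left j =>
    simp only [sylvesterMatrix, sylvester, transpose_apply, reindex_apply, submatrix_apply,
      of_apply, Fin.addCases_left]
    simpa [Fin.le_def] using ite_coeff_sub_eq_ite_le_add_natDegree p j i
  | right j =>
    simpa [sylvesterMatrix, sylvester] using ite_coeff_sub_eq_ite_le_add_natDegree q j i

theorem C_resultant_mem_span_pair_of_monic {p : ℤ[X]} (hp : p.Monic) (q : ℤ[X]) :
    C (_root_.resultant p q) ∈ Ideal.span {p, q} := by
  rw [Ideal.mem_span_pair]
  rcases eq_or_ne p.natDegree 0 with h0 | h0
  · exact ⟨C (_root_.resultant p q), 0, by simp [hp.natDegree_eq_zero.mp h0]⟩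
  · obtain ⟨a, b, -, -, hab⟩ := exists_mul_add_mul_eq_C_resultant q p le_rfl le_rfl (.inr h0)
    exact ⟨b, a, by rw [resultant_eq_polynomial_resultant, ← hab]; ring⟩

section InvariantSubmodule

variable {R L : Type*} [CommRing R] [AddCommGroup L] [Module R L] {g : Module.End R L}
  {M N : Submodule R L}

lemma aeval_restrict_apply (hM : ∀ x ∈ M, g x ∈ M) (p : R[X]) (x : M) :
    (aeval (g.restrict hM) p x : L) = aeval g p x := by
  induction p using Polynomial.induction_on' with
  | add p q hp hq => simp [hp, hq]
  | monomial k c => simp [Module.End.pow_restrict k hM, LinearMap.restrict_apply]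

lemma aeval_apply_mem (hM : ∀ x ∈ M, g x ∈ M) (p : R[X]) {x : L} (hx : x ∈ M) :
    aeval g p x ∈ M :=
  aeval_restrict_apply hM p ⟨x, hx⟩ ▸ (aeval (g.restrict hM) p ⟨x, hx⟩).2

lemma aeval_charpoly_apply_eq_zero {ι : Type*} [Fintype ι] [DecidableEq ι]
    (hM : ∀ x ∈ M, g x ∈ M) (b : Module.Basis ι R M) {F : Matrix ι ι R}
    (hF : ∀ j, g (b j) = ∑ i, F i j • (b i : L)) {x : L} (hx : x ∈ M) :
    aeval g F.charpoly x = 0 := by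
  have : Module.Free R M := .of_basis b
  have : Module.Finite R M := .of_basis b
  have hmat : LinearMap.toMatrix b b (g.restrict hM) = F := by
    ext i j
    have : g.restrict hM (b j) = ∑ i, F i j • b i := Subtype.ext (by simp [hF])
    simp [LinearMap.toMatrix_apply, this, Finsupp.single_apply]
  rw [← aeval_restrict_apply hM _ ⟨x, hx⟩, ← hmat, LinearMap.charpoly_toMatrix,
    LinearMap.aeval_self_charpoly]
  rfl

theorem aeval_apply_mem_sup_of_smul_mem_sup {c : R} (hMc : ∀ x, c • x ∈ M → x ∈ M)
    (hNc : ∀ x, c • x ∈ N → x ∈ N) (hgM : ∀ x ∈ M, g x ∈ M) (hgN : ∀ x ∈ N, g x ∈ N)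
    {p q : R[X]} (hp : ∀ x ∈ M, aeval g p x = 0) (hq : ∀ x ∈ N, aeval g q x = 0)
    {x : L} (hx : c • x ∈ M ⊔ N) {s : R[X]} (hs : s ∈ Ideal.span {p, q}) :
    aeval g s x ∈ M ⊔ N := by
  obtain ⟨u, hu, v, hv, huv⟩ := Submodule.mem_sup.mp hx
  have hpx : aeval g p x ∈ N := hNc _ <| by
    rw [← map_smul, ← huv, map_add, hp u hu, zero_add]
    exact aeval_apply_mem hgN p hv
  have hqx : aeval g q x ∈ M := hMc _ <| by
    rw [← map_smul, ← huv, map_add, hq v hv, add_zero]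
    exact aeval_apply_mem hgM q hu
  obtain ⟨a, b, rfl⟩ := Ideal.mem_span_pair.mp hs
  rw [map_add, map_mul, map_mul, LinearMap.add_apply, Module.End.mul_apply, Module.End.mul_apply]
  exact add_mem (Submodule.mem_sup_right (aeval_apply_mem hgN a hpx))
    (Submodule.mem_sup_left (aeval_apply_mem hgM b hqx))

end InvariantSubmodule

theorem resultant_charpoly_smul_mem_sup {L : Type*} [AddCommGroup L] {M N : Submodule ℤ L}
    (hMprim : ∀ x : L, ∀ c : ℤ, c ≠ 0 → c • x ∈ M → x ∈ M)
    (hNprim : ∀ x : L, ∀ c : ℤ, c ≠ 0 → c • x ∈ N → x ∈ N)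
    {g : Module.End ℤ L} (hgM : ∀ x ∈ M, g x ∈ M) (hgN : ∀ x ∈ N, g x ∈ N)
    {ι κ : Type*} [Fintype ι] [DecidableEq ι] [Fintype κ] [DecidableEq κ]
    (bM : Module.Basis ι ℤ M) (bN : Module.Basis κ ℤ N)
    {FM : Matrix ι ι ℤ} {FN : Matrix κ κ ℤ}
    (hFM : ∀ j, g (bM j) = ∑ i, FM i j • (bM i : L))
    (hFN : ∀ j, g (bN j) = ∑ i, FN i j • (bN i : L))
    {c : ℤ} (hc : c ≠ 0) {x : L} (hx : c • x ∈ M ⊔ N) :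
    _root_.resultant FM.charpoly FN.charpoly • x ∈ M ⊔ N := by
  have := aeval_apply_mem_sup_of_smul_mem_sup (hMprim · c hc) (hNprim · c hc) hgM hgN
    (fun _ ↦ aeval_charpoly_apply_eq_zero hgM bM hFM)
    (fun _ ↦ aeval_charpoly_apply_eq_zero hgN bN hFN) hx
    (C_resultant_mem_span_pair_of_monic FM.charpoly_monic FN.charpoly)
  rwa [aeval_C, Module.algebraMap_end_apply] at this

theorem prime_dvd_glue_dvd_resultant_general
    (L : Type*) [AddCommGroup L] [Module ℤ L]
    (M N : Submodule ℤ L)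
    (hMprim : ∀ x : L, ∀ c : ℤ, c ≠ 0 → c • x ∈ M → x ∈ M)
    (hNprim : ∀ x : L, ∀ c : ℤ, c ≠ 0 → c • x ∈ N → x ∈ N)
    (hindex : Finite (L ⧸ (M ⊔ N)))
    -- the isometry `f = f_M ⊕ f_N` of `L`
    (f : L ≃ₗ[ℤ] L)
    (hfM : ∀ x ∈ M, f x ∈ M) (hfN : ∀ x ∈ N, f x ∈ N)
    -- matrices of `f|M` and `f|N` in bases of `M` and `N`
    (m n : ℕ) (bM : Module.Basis (Fin m) ℤ M) (bN : Module.Basis (Fin n) ℤ N)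
    (FM : Matrix (Fin m) (Fin m) ℤ) (FN : Matrix (Fin n) (Fin n) ℤ)
    (hFM : ∀ j, f (bM j : L) = ∑ i, FM i j • (bM i : L))
    (hFN : ∀ j, f (bN j : L) = ∑ i, FN i j • (bN i : L)) :
    ∀ r : ℕ, r.Prime → r ∣ Nat.card (L ⧸ (M ⊔ N)) →
      (r : ℤ) ∣ _root_.resultant FM.charpoly FN.charpoly := by
  intro r hr hdvd
  -- `bM`, `bN` and the `•` in `hFM`, `hFN` live on the canonical `ℤ`-module structure
  obtain rfl : ‹Module ℤ L› = AddCommGroup.toIntModule L := Subsingleton.elim _ _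
  have := Fact.mk hr
  obtain ⟨y, hy⟩ := exists_prime_addOrderOf_dvd_card' r hdvd
  obtain ⟨x, rfl⟩ := Submodule.Quotient.mk_surjective _ y
  have hrx : (r : ℤ) • x ∈ M ⊔ N := by
    rw [← Submodule.Quotient.mk_eq_zero, Submodule.Quotient.mk_smul, natCast_zsmul, ← hy,
      addOrderOf_nsmul_eq_zero]
  have hres := resultant_charpoly_smul_mem_sup hMprim hNprim (g := f.toLinearMap) hfM hfN bM bN
    hFM hFN (Int.natCast_ne_zero.mpr hr.ne_zero) hrx
  rwa [← hy, addOrderOf_dvd_iff_zsmul_eq_zero, ← Submodule.Quotient.mk_smul,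
    Submodule.Quotient.mk_eq_zero]

/-- Let `M ⊕ N ↪ L` be a primitive extension of nondegenerate even
lattices and let `f_M ⊕ f_N` extend to an isometry `f` of `L`.  If `χ_M`, `χ_N`
are the characteristic polynomials of `f_M = f|M` and `f_N = f|N` (computed as the
characteristic polynomials of their matrices in bases of `M` and `N`), then every
prime dividing the order of the glue group `H = L/(M ⊕ N)` divides
`res(χ_M, χ_N)`. -/
theorem prime_dvd_glue_dvd_resultant
    (L : Type*) [AddCommGroup L] [Module ℤ L] [Module.Free ℤ L] [Module.Finite ℤ L]
    (B : L →ₗ[ℤ] L →ₗ[ℤ] ℤ)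
    (hsymm : ∀ x y, B x y = B y x)
    (hnd : ∀ v, (∀ w, B v w = 0) → v = 0)
    (heven : ∀ x, ∃ m : ℤ, B x x = 2 * m)
    (M N : Submodule ℤ L)
    (hMprim : ∀ x : L, ∀ c : ℤ, c ≠ 0 → c • x ∈ M → x ∈ M)
    (hNprim : ∀ x : L, ∀ c : ℤ, c ≠ 0 → c • x ∈ N → x ∈ N)
    (hperp : ∀ x ∈ M, ∀ y ∈ N, B x y = 0)
    (hMperp : ∀ x : L, (∀ y ∈ N, B x y = 0) → x ∈ M)
    (hNperp : ∀ x : L, (∀ y ∈ M, B x y = 0) → x ∈ N)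
    (hindex : Finite (L ⧸ (M ⊔ N)))
    -- the isometry `f = f_M ⊕ f_N` of `L`
    (f : L ≃ₗ[ℤ] L) (hfB : ∀ x y, B (f x) (f y) = B x y)
    (hfM : ∀ x ∈ M, f x ∈ M) (hfN : ∀ x ∈ N, f x ∈ N)
    -- matrices of `f|M` and `f|N` in bases of `M` and `N`
    (m n : ℕ) (bM : Module.Basis (Fin m) ℤ M) (bN : Module.Basis (Fin n) ℤ N)
    (FM : Matrix (Fin m) (Fin m) ℤ) (FN : Matrix (Fin n) (Fin n) ℤ)
    (hFM : ∀ j, f (bM j : L) = ∑ i, FM i j • (bM i : L))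
    (hFN : ∀ j, f (bN j : L) = ∑ i, FN i j • (bN i : L)) :
    ∀ r : ℕ, r.Prime → r ∣ Nat.card (L ⧸ (M ⊔ N)) →
      (r : ℤ) ∣ _root_.resultant FM.charpoly FN.charpoly :=
  prime_dvd_glue_dvd_resultant_general L M N hMprim hNprim hindex f hfM hfN m n bM bN FM FN hFM hFN
end

section
/- Let P ⊂ A ⊗ κ be a strictly characteristic subspace, where A is a 2σ-dimensional F_p-vector space with nondegenerate symmetric bilinear form, κ algebraically closed of characteristic p, and ψ = id ⊗ Frob_κ. Then l = P ∩ ψ(P) ∩ ⋯ ∩ ψ^{σ-1}(P) is one-dimensional, P = l + ψ^{-1}(l) + ⋯ + ψ^{-(σ-1)}(l), and l + ψ(l) + ⋯ + ψ^{2σ-1}(l) = A ⊗ κ. -/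
/-!
Let `Φ` be the action of `ψ` on subspaces of `V = A ⊗ κ`: an order automorphism that preserves
dimension and commutes with `⊥`. Put `S n = P + Φ P + ⋯ + Φ^(n-1) P` (`orbitSup Φ P n`) and
`T n = P ∩ Φ P ∩ ⋯ ∩ Φ^(n-1) P` (`orbitInf Φ P n`); as `P = P^⊥`, `T n = (S n)^⊥`.

Since `S (n+1) = S n + Φ (S n)` and `Φ (S (n-1)) ⊆ S n ∩ Φ (S n)`, the jumps
`dim S (n+1) - dim S n` never increase. They start at `1`, and a zero jump makes `S n` a
`Φ`-stable subspace containing `P`, which strict characteristicity forces to be `V`. Hence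
`dim S n = σ + n - 1` for `1 ≤ n ≤ σ + 1`, so `dim T n = σ + 1 - n` and `l = T σ` is a line.

Dually, `T (n+1) + Φ⁻¹ T (n+1) ⊆ T n`, and the inclusion `T (n+1) ⊆ T (n+1) + Φ⁻¹ T (n+1)` is
strict (otherwise `T (n+1)`, and with it `S (n+1)`, would be `Φ`-stable). Counting dimensions,
`T n = T (n+1) + Φ⁻¹ T (n+1)`, which unwinds to `P = T 1 = l + Φ⁻¹ l + ⋯ + Φ^(1-σ) l`. Applying
`Φ^(σ-1)` to `V = S (σ+1)` then shows that `l, Φ l, …, Φ^(2σ-1) l` span `V`.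
-/

open Module Submodule TensorProduct

lemma RelIso.pow_succ_apply {β : Type*} {r : β → β → Prop} (e : r ≃r r) (i : ℕ) (x : β) :
    (e ^ (i + 1)) x = e ((e ^ i) x) := by
  rw [pow_succ', RelIso.mul_apply]

section OrbitLattice

variable {α : Type*} [CompleteLattice α]

def orbitSup (Φ : α ≃o α) (w : α) (n : ℕ) : α := ⨆ i < n, (Φ ^ i) w

def orbitInf (Φ : α ≃o α) (w : α) (n : ℕ) : α := ⨅ i < n, (Φ ^ i) w

variable {Φ : α ≃o α} {w q : α}

lemma orbitSup_one : orbitSup Φ w 1 = w := by simp [orbitSup]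

lemma orbitSup_succ (n : ℕ) : orbitSup Φ w (n + 1) = w ⊔ Φ (orbitSup Φ w n) := by
  simp only [orbitSup, Nat.iSup_lt_succ', pow_zero, RelIso.one_apply, OrderIso.map_iSup₂,
    RelIso.pow_succ_apply]

lemma orbitInf_succ (n : ℕ) : orbitInf Φ w (n + 1) = w ⊓ Φ (orbitInf Φ w n) := by
  simp only [orbitInf, Nat.iInf_lt_succ', pow_zero, RelIso.one_apply, OrderIso.map_iInf₂,
    RelIso.pow_succ_apply]

lemma orbitSup_two : orbitSup Φ w 2 = w ⊔ Φ w := by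
  rw [orbitSup_succ, orbitSup_one]

lemma orbitInf_one : orbitInf Φ w 1 = w := by simp [orbitInf]

lemma orbitSup_mono : Monotone (orbitSup Φ w) := fun _ _ h =>
  biSup_mono fun _ hi => lt_of_lt_of_le hi h

lemma orbitInf_anti : Antitone (orbitInf Φ w) := fun _ _ h =>
  biInf_mono fun _ hi => lt_of_lt_of_le hi h

lemma apply_orbitSup_le (n : ℕ) : Φ (orbitSup Φ w n) ≤ orbitSup Φ w (n + 1) := by
  rw [orbitSup_succ]; exact le_sup_right

lemma inv_apply_orbitInf_le (n : ℕ) : Φ⁻¹ (orbitInf Φ w (n + 1)) ≤ orbitInf Φ w n := by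
  rw [orbitInf_succ, ← Φ.le_iff_le, RelIso.apply_inv_self]
  exact inf_le_right

lemma le_orbitSup {n : ℕ} (hn : n ≠ 0) : w ≤ orbitSup Φ w n :=
  orbitSup_one.symm.trans_le (orbitSup_mono (Nat.one_le_iff_ne_zero.mpr hn))

lemma orbitSup_succ_eq_sup_apply {n : ℕ} (hn : n ≠ 0) :
    orbitSup Φ w (n + 1) = orbitSup Φ w n ⊔ Φ (orbitSup Φ w n) := by
  refine le_antisymm ?_ (sup_le (orbitSup_mono n.le_succ) (apply_orbitSup_le n))
  rw [orbitSup_succ]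
  exact sup_le_sup_right (le_orbitSup hn) _

lemma pow_apply_le_of_apply_le (hw : w ≤ q) (hq : Φ q ≤ q) (i : ℕ) : (Φ ^ i) w ≤ q := by
  induction i with
  | zero => exact hw
  | succ i ih => rw [RelIso.pow_succ_apply]; exact (Φ.monotone ih).trans hq

lemma orbitSup_lt_succ (hinv : ∀ Q, w ≤ Q → Φ Q ≤ Q → Q = ⊤) {n : ℕ} (hn : n ≠ 0)
    (hne : orbitSup Φ w n ≠ ⊤) : orbitSup Φ w n < orbitSup Φ w (n + 1) := by
  refine (orbitSup_mono n.le_succ).lt_of_ne fun heq => hne (hinv _ (le_orbitSup hn) ?_)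
  exact (apply_orbitSup_le n).trans_eq heq.symm

lemma pow_apply_orbitSup_orbitSup_inv_le (m k : ℕ) :
    (Φ ^ m) (orbitSup Φ (orbitSup Φ⁻¹ w (m + 1)) k) ≤ orbitSup Φ w (m + k) := by
  simp only [orbitSup, OrderIso.map_iSup₂, iSup₂_le_iff]
  intro j hj i hi
  have : Φ ^ m * Φ ^ j * Φ⁻¹ ^ i = Φ ^ (m + j - i) := by
    rw [inv_pow, ← pow_add, ← pow_sub _ (by omega)]
  rw [← RelIso.mul_apply, ← RelIso.mul_apply, this]
  exact le_iSup₂_of_le (m + j - i) (by omega) le_rfl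

end OrbitLattice

section OrbitFinrank

variable {K V : Type*} [DivisionRing K] [AddCommGroup V] [Module K V] [FiniteDimensional K V]
  {Φ : Submodule K V ≃o Submodule K V} {w : Submodule K V}

lemma finrank_orbitSup_add_two_add_le (hΦ : ∀ Q, finrank K ↥(Φ Q) = finrank K Q) (n : ℕ) :
    finrank K ↥(orbitSup Φ w (n + 2)) + finrank K ↥(orbitSup Φ w n) ≤
      2 * finrank K ↥(orbitSup Φ w (n + 1)) := by
  set X := orbitSup Φ w
  have hsup : X (n + 2) = X (n + 1) ⊔ Φ (X (n + 1)) := orbitSup_succ_eq_sup_apply n.succ_ne_zero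
  have hinf : Φ (X n) ≤ X (n + 1) ⊓ Φ (X (n + 1)) :=
    le_inf (apply_orbitSup_le n) (Φ.monotone (orbitSup_mono n.le_succ))
  have hmod := Submodule.finrank_sup_add_finrank_inf_eq (X (n + 1)) (Φ (X (n + 1)))
  have hle := Submodule.finrank_mono hinf
  rw [← hsup, hΦ] at hmod
  rw [hΦ] at hle
  omega

lemma finrank_orbitSup_succ_le (hΦ : ∀ Q, finrank K ↥(Φ Q) = finrank K Q)
    (hw : finrank K ↥(w ⊔ Φ w) = finrank K w + 1) (n : ℕ) :
    finrank K ↥(orbitSup Φ w (n + 2)) ≤ finrank K ↥(orbitSup Φ w (n + 1)) + 1 := by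
  induction n with
  | zero => rw [orbitSup_two, orbitSup_one, hw]
  | succ n ih =>
    have ih : finrank K ↥(orbitSup Φ w (n + 1 + 1)) ≤ finrank K ↥(orbitSup Φ w (n + 1)) + 1 := ih
    have := finrank_orbitSup_add_two_add_le hΦ (w := w) (n + 1)
    omega

lemma finrank_orbitSup (hΦ : ∀ Q, finrank K ↥(Φ Q) = finrank K Q)
    (hw : finrank K ↥(w ⊔ Φ w) = finrank K w + 1) (hinv : ∀ Q, w ≤ Q → Φ Q ≤ Q → Q = ⊤)
    {n : ℕ} (hn : finrank K w + n ≤ finrank K V) :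
    finrank K ↥(orbitSup Φ w (n + 1)) = finrank K w + n := by
  induction n with
  | zero => rw [orbitSup_one, add_zero]
  | succ n ih =>
    have ih := ih (by omega)
    have hlt := orbitSup_lt_succ hinv (Nat.add_one_ne_zero n) fun htop => by
      rw [htop, finrank_top] at ih; omega
    have := Submodule.finrank_lt_finrank_of_lt hlt
    have : finrank K ↥(orbitSup Φ w (n + 1 + 1)) ≤ finrank K ↥(orbitSup Φ w (n + 1)) + 1 :=
      finrank_orbitSup_succ_le hΦ hw n
    omega

end OrbitFinrank

namespace LinearMap.BilinForm

variable {R M : Type*} [CommRing R] [AddCommGroup M] [Module R M]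

lemma orthogonal_iSup (B : LinearMap.BilinForm R M) {ι : Sort*} (N : ι → Submodule R M) :
    B.orthogonal (⨆ i, N i) = ⨅ i, B.orthogonal (N i) := by
  ext x
  have key : ∀ N : Submodule R M, x ∈ B.orthogonal N ↔ N ≤ LinearMap.ker (B.flip x) :=
    fun _ => Iff.rfl
  simp only [Submodule.mem_iInf, key, iSup_le_iff]

variable {K V : Type*} [Field K] [AddCommGroup V] [Module K V]

lemma orthogonal_eq_self_of_le [FiniteDimensional K V] {B : LinearMap.BilinForm K V}
    (hB : B.Nondegenerate) {P : Submodule K V} (hiso : P ≤ B.orthogonal P)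
    (hdim : finrank K V = 2 * finrank K P) : B.orthogonal P = P :=
  (Submodule.eq_of_le_of_finrank_le hiso (by rw [finrank_orthogonal hB]; omega)).symm

lemma map_orthogonal {τ : K →+* K} [RingHomSurjective τ] {f : V →ₛₗ[τ] V}
    {B : LinearMap.BilinForm K V} (hf : Function.Bijective f)
    (hB : ∀ x y, B (f x) (f y) = τ (B x y)) (Q : Submodule K V) :
    (B.orthogonal Q).map f = B.orthogonal (Q.map f) := by
  ext y
  obtain ⟨x, rfl⟩ := hf.surjective y
  simp only [Submodule.mem_map, LinearMap.BilinForm.mem_orthogonal_iff,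
    forall_exists_index, and_imp, forall_apply_eq_imp_iff₂, hB,
    map_eq_zero, hf.injective.eq_iff, exists_eq_right]

end LinearMap.BilinForm

section Orthogonal

variable {R M : Type*} [CommRing R] [AddCommGroup M] [Module R M]
  {B : LinearMap.BilinForm R M} {Φ : Submodule R M ≃o Submodule R M} {P : Submodule R M}

lemma orthogonal_orbitSup (hΦB : ∀ Q, Φ (B.orthogonal Q) = B.orthogonal (Φ Q))
    (hP : B.orthogonal P = P) (n : ℕ) : B.orthogonal (orbitSup Φ P n) = orbitInf Φ P n := by
  have hpow : ∀ i : ℕ, B.orthogonal ((Φ ^ i) P) = (Φ ^ i) P := by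
    intro i
    induction i with
    | zero => exact hP
    | succ i ih => rw [RelIso.pow_succ_apply, ← hΦB, ih]
  simp only [orbitSup, orbitInf, LinearMap.BilinForm.orthogonal_iSup, hpow]

end Orthogonal

section Lagrangian

variable {K V : Type*} [Field K] [AddCommGroup V] [Module K V]
  {B : LinearMap.BilinForm K V} {Φ : Submodule K V ≃o Submodule K V} {P : Submodule K V}

/-- Abstract form of a strictly characteristic subspace: `Φ` stands for the action of `ψ` on
subspaces, and a totally isotropic subspace of half dimension is its own orthogonal. -/
structure IsStrictlyCharacteristic (B : LinearMap.BilinForm K V)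
    (Φ : Submodule K V ≃o Submodule K V) (P : Submodule K V) : Prop where
  orthogonal_self : B.orthogonal P = P
  finrank_eq_two_mul : finrank K V = 2 * finrank K P
  finrank_sup_apply : finrank K ↥(P ⊔ Φ P) = finrank K P + 1
  eq_top_of_apply_le : ∀ Q, P ≤ Q → Φ Q ≤ Q → Q = ⊤

variable [FiniteDimensional K V]

namespace IsStrictlyCharacteristic

variable (hΦ : ∀ Q, finrank K ↥(Φ Q) = finrank K Q) (hP : IsStrictlyCharacteristic B Φ P)
include hΦ hP

lemma finrank_orbitSup {n : ℕ} (hn : n ≤ finrank K P) :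
    finrank K ↥(orbitSup Φ P (n + 1)) = finrank K P + n :=
  _root_.finrank_orbitSup hΦ hP.finrank_sup_apply hP.eq_top_of_apply_le
    (by rw [hP.finrank_eq_two_mul]; omega)

lemma finrank_orbitInf (hB : B.Nondegenerate) (hΦB : ∀ Q, Φ (B.orthogonal Q) = B.orthogonal (Φ Q))
    {n : ℕ} (hn : n ≤ finrank K P) :
    finrank K ↥(orbitInf Φ P (n + 1)) = finrank K P - n := by
  rw [← orthogonal_orbitSup hΦB hP.orthogonal_self, LinearMap.BilinForm.finrank_orthogonal hB,
    hP.finrank_orbitSup hΦ hn, hP.finrank_eq_two_mul]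
  omega

lemma apply_orbitInf_ne (hB : B.Nondegenerate) (hB' : B.IsRefl)
    (hΦB : ∀ Q, Φ (B.orthogonal Q) = B.orthogonal (Φ Q)) {n : ℕ} (hn : n < finrank K P) :
    Φ (orbitInf Φ P (n + 1)) ≠ orbitInf Φ P (n + 1) := by
  intro h
  have hX : Φ (orbitSup Φ P (n + 1)) = orbitSup Φ P (n + 1) := by
    rw [← LinearMap.BilinForm.orthogonal_orthogonal hB hB' (orbitSup Φ P (n + 1)),
      orthogonal_orbitSup hΦB hP.orthogonal_self, hΦB, h]
  have hrank := hP.finrank_orbitSup hΦ hn.le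
  rw [hP.eq_top_of_apply_le _ (le_orbitSup n.succ_ne_zero) hX.le, finrank_top,
    hP.finrank_eq_two_mul] at hrank
  omega

lemma orbitInf_eq_sup_inv_apply (hB : B.Nondegenerate) (hB' : B.IsRefl)
    (hΦB : ∀ Q, Φ (B.orthogonal Q) = B.orthogonal (Φ Q)) {n : ℕ} (hn : n + 1 < finrank K P) :
    orbitInf Φ P (n + 1) = orbitInf Φ P (n + 2) ⊔ Φ⁻¹ (orbitInf Φ P (n + 2)) := by
  set T := orbitInf Φ P (n + 2)
  have hinv_rank : finrank K ↥(Φ⁻¹ T) = finrank K T := by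
    rw [← hΦ, RelIso.apply_inv_self]
  have hnot_le : ¬ Φ⁻¹ T ≤ T := fun hle => by
    have heq := Submodule.eq_of_le_of_finrank_le hle hinv_rank.ge
    exact hP.apply_orbitInf_ne hΦ hB hB' hΦB hn
      ((congrArg Φ heq).symm.trans (RelIso.apply_inv_self Φ T))
  have hlt := Submodule.finrank_lt_finrank_of_lt (left_lt_sup.mpr hnot_le)
  refine (Submodule.eq_of_le_of_finrank_le (S₁ := T ⊔ Φ⁻¹ T)
    (sup_le (orbitInf_anti (n + 1).le_succ) (inv_apply_orbitInf_le (n + 1))) ?_).symm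
  have : finrank K ↥T = finrank K P - (n + 1) := hP.finrank_orbitInf hΦ hB hΦB hn.le
  have := hP.finrank_orbitInf hΦ hB hΦB (n := n) (by omega)
  omega

lemma orbitSup_inv_orbitInf (hB : B.Nondegenerate) (hB' : B.IsRefl)
    (hΦB : ∀ Q, Φ (B.orthogonal Q) = B.orthogonal (Φ Q)) {j : ℕ} (hj : j < finrank K P) :
    orbitSup Φ⁻¹ (orbitInf Φ P (finrank K P)) (j + 1) = orbitInf Φ P (finrank K P - j) := by
  induction j with
  | zero => rw [orbitSup_one, Nat.sub_zero]
  | succ j ih =>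
    obtain ⟨n, hn⟩ : ∃ n, finrank K P - j = n + 2 := ⟨finrank K P - j - 2, by omega⟩
    rw [orbitSup_succ_eq_sup_apply j.succ_ne_zero, ih (by omega), hn,
      ← hP.orbitInf_eq_sup_inv_apply hΦ hB hB' hΦB (by omega)]
    congr 1
    omega

theorem line_generates (hB : B.Nondegenerate) (hB' : B.IsRefl)
    (hΦB : ∀ Q, Φ (B.orthogonal Q) = B.orthogonal (Φ Q)) :
    finrank K ↥(orbitInf Φ P (finrank K P)) = 1 ∧
      P = orbitSup Φ⁻¹ (orbitInf Φ P (finrank K P)) (finrank K P) ∧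
      orbitSup Φ (orbitInf Φ P (finrank K P)) (2 * finrank K P) = ⊤ := by
  obtain ⟨s, hs⟩ : ∃ s, finrank K P = s + 1 := by
    have := Submodule.finrank_le (P ⊔ Φ P)
    rw [hP.finrank_sup_apply, hP.finrank_eq_two_mul] at this
    exact ⟨finrank K P - 1, by omega⟩
  set l := orbitInf Φ P (finrank K P) with hl
  have hP_eq : orbitSup Φ⁻¹ l (s + 1) = P := by
    rw [hP.orbitSup_inv_orbitInf hΦ hB hB' hΦB (by omega), hs, Nat.add_sub_cancel_left,
      orbitInf_one]
  have htop : orbitSup Φ P (s + 2) = ⊤ := Submodule.eq_top_of_finrank_eq <| by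
    rw [hP.finrank_orbitSup hΦ (n := s + 1) (by omega), hP.finrank_eq_two_mul]
    omega
  refine ⟨?_, ?_, top_unique ?_⟩
  · rw [hl, hs, hP.finrank_orbitInf hΦ hB hΦB (by omega)]
    omega
  · rw [hs, hP_eq]
  · calc ⊤ = (Φ ^ s) ⊤ := (OrderIso.map_top _).symm
      _ = (Φ ^ s) (orbitSup Φ (orbitSup Φ⁻¹ l (s + 1)) (s + 2)) := by rw [hP_eq, htop]
      _ ≤ orbitSup Φ l (s + (s + 2)) := pow_apply_orbitSup_orbitSup_inv_le s (s + 2)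
      _ = orbitSup Φ l (2 * finrank K P) := by rw [hs]; ring_nf

end IsStrictlyCharacteristic

end Lagrangian

section SemilinearBijection

variable {R M : Type*} [Semiring R] [AddCommMonoid M] [Module R M] {τ : R →+* R}
  [RingHomSurjective τ] (f : M →ₛₗ[τ] M) (hf : Function.Bijective f)

lemma coe_pow_orderIsoMapComapOfBijective_apply (i : ℕ) (Q : Submodule R M) :
    ((orderIsoMapComapOfBijective f hf ^ i) Q : Set M) = f^[i] '' Q := by
  induction i with
  | zero => simp
  | succ i ih =>
    rw [RelIso.pow_succ_apply, orderIsoMapComapOfBijective_apply, map_coe, ih, ← Set.image_comp,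
      ← Function.iterate_succ']

lemma coe_inv_pow_orderIsoMapComapOfBijective_apply (i : ℕ) (Q : Submodule R M) :
    (((orderIsoMapComapOfBijective f hf)⁻¹ ^ i) Q : Set M) = f^[i] ⁻¹' Q := by
  induction i generalizing Q with
  | zero => simp
  | succ i ih =>
    rw [pow_succ, RelIso.mul_apply, ih, Function.iterate_succ', Set.preimage_comp]
    rfl

lemma span_iterate_image (i : ℕ) (Q : Submodule R M) :
    span R (f^[i] '' Q) = (orderIsoMapComapOfBijective f hf ^ i) Q := by
  rw [← coe_pow_orderIsoMapComapOfBijective_apply, span_eq]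

lemma span_iterate_preimage (i : ℕ) (Q : Submodule R M) :
    span R (f^[i] ⁻¹' Q) = ((orderIsoMapComapOfBijective f hf)⁻¹ ^ i) Q := by
  rw [← coe_inv_pow_orderIsoMapComapOfBijective_apply, span_eq]

end SemilinearBijection

lemma Submodule.finrank_map_of_injective {K V : Type*} [DivisionRing K] [AddCommGroup V]
    [Module K V] {τ : K →+* K} [RingHomSurjective τ] {f : V →ₛₗ[τ] V}
    (hf : Function.Injective f) (Q : Submodule K V) :
    finrank K ↥(Q.map f) = finrank K Q := by
  have hbij : Function.Bijective (f.submoduleMap Q) :=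
    ⟨fun x y h => Subtype.ext (hf (congrArg Subtype.val h)), f.submoduleMap_surjective Q⟩
  unfold finrank
  rw [rank_eq_of_equiv_equiv τ (AddEquiv.ofBijective (f.submoduleMap Q) hbij)
    ⟨τ.injective, RingHomSurjective.is_surjective⟩ (map_smulₛₗ (f.submoduleMap Q))]

section Semilinear

variable {K V : Type*} [Field K] [AddCommGroup V] [Module K V] [FiniteDimensional K V]
  {τ : K →+* K} [RingHomSurjective τ] {f : V →ₛₗ[τ] V} {B : LinearMap.BilinForm K V}
  {P : Submodule K V} {σ : ℕ}

lemma isStrictlyCharacteristic_orderIsoMapComapOfBijective (hf : Function.Bijective f)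
    (hB : B.Nondegenerate) (hV : finrank K V = 2 * σ) (hPdim : finrank K P = σ)
    (hPf : finrank K ↥(P ⊔ span K (f '' P)) = σ + 1) (hPiso : ∀ v ∈ P, ∀ w ∈ P, B v w = 0)
    (hstrict : span K (⋃ i : ℕ, f^[i] '' (P : Set V)) = ⊤) :
    IsStrictlyCharacteristic B (orderIsoMapComapOfBijective f hf) P where
  orthogonal_self := LinearMap.BilinForm.orthogonal_eq_self_of_le hB
    (fun v hv w hw => hPiso w hw v hv) (by rw [hV, hPdim])
  finrank_eq_two_mul := by rw [hV, hPdim]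
  finrank_sup_apply := by
    rw [← pow_one (orderIsoMapComapOfBijective f hf), ← span_iterate_image f hf,
      Function.iterate_one, hPf, hPdim]
  eq_top_of_apply_le Q hPQ hQ := by
    rw [eq_top_iff, ← hstrict, span_iUnion]
    simp only [span_iterate_image f hf]
    exact iSup_le (pow_apply_le_of_apply_le hPQ hQ)

theorem strictly_characteristic_line_of_semilinear (hf : Function.Bijective f)
    (hB : B.Nondegenerate) (hB' : B.IsRefl) (hBf : ∀ x y, B (f x) (f y) = τ (B x y))
    (hV : finrank K V = 2 * σ) (hPdim : finrank K P = σ)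
    (hPf : finrank K ↥(P ⊔ span K (f '' P)) = σ + 1) (hPiso : ∀ v ∈ P, ∀ w ∈ P, B v w = 0)
    (hstrict : span K (⋃ i : ℕ, f^[i] '' (P : Set V)) = ⊤) :
    finrank K ↥(⨅ i ∈ Finset.range σ, span K (f^[i] '' (P : Set V))) = 1 ∧
    P = span K (⋃ i ∈ Finset.range σ,
        f^[i] ⁻¹' ((⨅ k ∈ Finset.range σ, span K (f^[k] '' (P : Set V))) : Set V)) ∧
    span K (⋃ i ∈ Finset.range (2 * σ),
        f^[i] '' ((⨅ k ∈ Finset.range σ, span K (f^[k] '' (P : Set V))) : Set V)) = ⊤ := by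
  set Φ := orderIsoMapComapOfBijective f hf
  have hP := isStrictlyCharacteristic_orderIsoMapComapOfBijective hf hB hV hPdim hPf hPiso hstrict
  obtain ⟨h1, h2, h3⟩ := hP.line_generates (finrank_map_of_injective hf.injective) hB hB'
    (LinearMap.BilinForm.map_orthogonal hf hBf)
  have hl : (⨅ i ∈ Finset.range σ, span K (f^[i] '' (P : Set V))) = orbitInf Φ P σ := by
    simp only [Finset.mem_range, span_iterate_image f hf]
    rfl
  -- in the statement the coercion to `Set V` is elaborated inside the `⨅`
  have hl_coe : (⨅ i ∈ Finset.range σ, (span K (f^[i] '' P) : Set V)) = orbitInf Φ P σ := by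
    rw [← hl]
    simp only [coe_iInf, Set.iInf_eq_iInter]
  rw [hPdim] at h1 h2 h3
  rw [hl, hl_coe, span_iUnion₂, span_iUnion₂]
  simp only [Finset.mem_range, span_iterate_preimage f hf, span_iterate_image f hf]
  exact ⟨h1, h2, h3⟩

end Semilinear

section BaseChange

variable {k L : Type*} [CommRing k] [CommRing L] [Algebra k L]

def AlgEquiv.rTensorSemilinear (F : L ≃ₐ[k] L) (M : Type*) [AddCommGroup M] [Module k M] :
    L ⊗[k] M →ₛₗ[(F.toRingEquiv : L →+* L)] L ⊗[k] M where
  toFun := F.toLinearEquiv.rTensor M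
  map_add' := map_add _
  map_smul' c x := by
    induction x using TensorProduct.induction_on with
    | zero => simp
    | tmul d m => simp [TensorProduct.smul_tmul']
    | add x y hx hy => simp_all [smul_add]

lemma LinearMap.BilinForm.baseChange_rTensor {M : Type*} [AddCommGroup M] [Module k M]
    (b : LinearMap.BilinForm k M)
    (F : L ≃ₐ[k] L) (x y : L ⊗[k] M) :
    b.baseChange L (F.toLinearEquiv.rTensor M x) (F.toLinearEquiv.rTensor M y) =
      F (b.baseChange L x y) := by
  induction x using TensorProduct.induction_on with
  | zero => simp
  | add x x' hx hx' => simp_all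
  | tmul a m =>
    induction y using TensorProduct.induction_on with
    | zero => simp
    | add y y' hy hy' => simp_all
    | tmul a' m' => simp

end BaseChange

lemma LinearMap.BilinForm.Nondegenerate.baseChange {k L M : Type*} [Field k] [Field L]
    [Algebra k L] [AddCommGroup M] [Module k M] [FiniteDimensional k M]
    {b : LinearMap.BilinForm k M} (hb : b.Nondegenerate) : (b.baseChange L).Nondegenerate := by
  classical
  let e := Module.finBasis k M
  have hmat : LinearMap.BilinForm.toMatrix (e.baseChange L) (b.baseChange L) =
      (algebraMap k L).mapMatrix (LinearMap.BilinForm.toMatrix e b) := by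
    ext i j
    simp [LinearMap.BilinForm.toMatrix_apply, Algebra.smul_def]
  rw [LinearMap.BilinForm.nondegenerate_iff_det_ne_zero (e.baseChange L), hmat, ← RingHom.map_det,
    ne_eq, map_eq_zero_iff _ (algebraMap k L).injective, ← ne_eq,
    ← LinearMap.BilinForm.nondegenerate_iff_det_ne_zero e]
  exact hb

theorem strictly_characteristic_line_general
    (p : ℕ) [Fact p.Prime]
    (κ : Type*) [Field κ] [IsAlgClosed κ] [CharP κ p] [Algebra (ZMod p) κ]
    (A : Type*) [AddCommGroup A] [Module (ZMod p) A] [Module.Finite (ZMod p) A]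
    (σ : ℕ) (hdim : Module.finrank (ZMod p) A = 2 * σ)
    -- a nondegenerate symmetric bilinear form on `A`
    (b : A →ₗ[ZMod p] A →ₗ[ZMod p] ZMod p)
    (hbsymm : ∀ x y, b x y = b y x)
    (hbnd : ∀ x, (∀ y, b x y = 0) → x = 0)
    -- its `κ`-bilinear extension to `A ⊗ κ`
    (Bv : (κ ⊗[ZMod p] A) →ₗ[κ] (κ ⊗[ZMod p] A) →ₗ[κ] κ)
    (hBv : ∀ (c₁ c₂ : κ) (a₁ a₂ : A),
      Bv (c₁ ⊗ₜ a₁) (c₂ ⊗ₜ a₂) = c₁ * c₂ * algebraMap (ZMod p) κ (b a₁ a₂))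
    -- `ψ = id_A ⊗ Frob_κ`
    (ψ : (κ ⊗[ZMod p] A) →ₗ[ZMod p] (κ ⊗[ZMod p] A))
    (hψ : ∀ (c : κ) (a : A), ψ (c ⊗ₜ a) = (c ^ p) ⊗ₜ a)
    -- `P` is a strictly characteristic subspace
    (P : Submodule κ (κ ⊗[ZMod p] A))
    (hPdim : Module.finrank κ P = σ)
    (hPψ : Module.finrank κ
      ↥(P ⊔ Submodule.span κ (⇑ψ '' (P : Set (κ ⊗[ZMod p] A)))) = σ + 1)
    (hPiso : ∀ v ∈ P, ∀ w ∈ P, Bv v w = 0)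
    (hstrict : Submodule.span κ
      (⋃ i : ℕ, (⇑ψ)^[i] '' (P : Set (κ ⊗[ZMod p] A))) = ⊤) :
    Module.finrank κ
        ↥(⨅ i ∈ Finset.range σ,
          Submodule.span κ ((⇑ψ)^[i] '' (P : Set (κ ⊗[ZMod p] A)))) = 1 ∧
    P = Submodule.span κ
        (⋃ i ∈ Finset.range σ, (⇑ψ)^[i] ⁻¹'
          ((⨅ k ∈ Finset.range σ,
            Submodule.span κ ((⇑ψ)^[k] '' (P : Set (κ ⊗[ZMod p] A)))) :
              Set (κ ⊗[ZMod p] A))) ∧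
    Submodule.span κ
        (⋃ i ∈ Finset.range (2 * σ), (⇑ψ)^[i] ''
          ((⨅ k ∈ Finset.range σ,
            Submodule.span κ ((⇑ψ)^[k] '' (P : Set (κ ⊗[ZMod p] A)))) :
              Set (κ ⊗[ZMod p] A))) = ⊤ := by
  set F := FiniteField.frobeniusAlgEquiv (ZMod p) κ p
  have hψF : ⇑ψ = ⇑(F.rTensorSemilinear A) := congrArg DFunLike.coe
    (TensorProduct.ext' fun c a => by simp [hψ, F, ZMod.card] :
      ψ = (F.toLinearEquiv.rTensor A).toLinearMap)
  have hBv' : Bv = LinearMap.BilinForm.baseChange κ b :=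
    LinearMap.BilinForm.ext_basis ((Module.finBasis (ZMod p) A).baseChange κ) fun i j => by
      simp [hBv, Algebra.smul_def]
  rw [hψF] at hPψ hstrict ⊢
  refine strictly_characteristic_line_of_semilinear (F.toLinearEquiv.rTensor A).bijective ?_ ?_ ?_
    (by rw [finrank_baseChange, hdim]) hPdim hPψ hPiso hstrict <;> rw [hBv']
  · exact LinearMap.BilinForm.Nondegenerate.baseChange
      ⟨hbnd, fun y hy => hbnd y fun x => (hbsymm y x).trans (hy x)⟩
  · exact (LinearMap.BilinForm.IsSymm.baseChange κ ⟨hbsymm⟩).isRefl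
  · exact LinearMap.BilinForm.baseChange_rTensor b F

/-- Let `P ⊂ A ⊗ κ` be a strictly characteristic subspace, where `A`
is a `2σ`-dimensional `F_p`-space with a nondegenerate symmetric bilinear form, `κ`
algebraically closed of characteristic `p`, and `ψ = id ⊗ Frob`.  Then
`l = P ∩ ψ(P) ∩ ⋯ ∩ ψ^(σ-1)(P)` is a line, `P = l + ψ⁻¹(l) + ⋯ + ψ^-(σ-1)(l)`, and
`l + ψ(l) + ⋯ + ψ^(2σ-1)(l) = A ⊗ κ`. -/
theorem strictly_characteristic_line
    (p : ℕ) [Fact p.Prime]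
    (κ : Type*) [Field κ] [IsAlgClosed κ] [CharP κ p] [Algebra (ZMod p) κ]
    (A : Type*) [AddCommGroup A] [Module (ZMod p) A] [Module.Finite (ZMod p) A]
    (σ : ℕ) (hσ : 0 < σ) (hdim : Module.finrank (ZMod p) A = 2 * σ)
    -- a nondegenerate symmetric bilinear form on `A`
    (b : A →ₗ[ZMod p] A →ₗ[ZMod p] ZMod p)
    (hbsymm : ∀ x y, b x y = b y x)
    (hbnd : ∀ x, (∀ y, b x y = 0) → x = 0)
    -- its `κ`-bilinear extension to `A ⊗ κ`
    (Bv : (κ ⊗[ZMod p] A) →ₗ[κ] (κ ⊗[ZMod p] A) →ₗ[κ] κ)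
    (hBv : ∀ (c₁ c₂ : κ) (a₁ a₂ : A),
      Bv (c₁ ⊗ₜ a₁) (c₂ ⊗ₜ a₂) = c₁ * c₂ * algebraMap (ZMod p) κ (b a₁ a₂))
    -- `ψ = id_A ⊗ Frob_κ`
    (ψ : (κ ⊗[ZMod p] A) →ₗ[ZMod p] (κ ⊗[ZMod p] A))
    (hψ : ∀ (c : κ) (a : A), ψ (c ⊗ₜ a) = (c ^ p) ⊗ₜ a)
    -- `P` is a strictly characteristic subspace
    (P : Submodule κ (κ ⊗[ZMod p] A))
    (hPdim : Module.finrank κ P = σ)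
    (hPψ : Module.finrank κ
      ↥(P ⊔ Submodule.span κ (⇑ψ '' (P : Set (κ ⊗[ZMod p] A)))) = σ + 1)
    (hPiso : ∀ v ∈ P, ∀ w ∈ P, Bv v w = 0)
    (hstrict : Submodule.span κ
      (⋃ i : ℕ, (⇑ψ)^[i] '' (P : Set (κ ⊗[ZMod p] A))) = ⊤) :
    Module.finrank κ
        ↥(⨅ i ∈ Finset.range σ,
          Submodule.span κ ((⇑ψ)^[i] '' (P : Set (κ ⊗[ZMod p] A)))) = 1 ∧
    P = Submodule.span κ
        (⋃ i ∈ Finset.range σ, (⇑ψ)^[i] ⁻¹'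
          ((⨅ k ∈ Finset.range σ,
            Submodule.span κ ((⇑ψ)^[k] '' (P : Set (κ ⊗[ZMod p] A)))) :
              Set (κ ⊗[ZMod p] A))) ∧
    Submodule.span κ
        (⋃ i ∈ Finset.range (2 * σ), (⇑ψ)^[i] ''
          ((⨅ k ∈ Finset.range σ,
            Submodule.span κ ((⇑ψ)^[k] '' (P : Set (κ ⊗[ZMod p] A)))) :
              Set (κ ⊗[ZMod p] A))) = ⊤ :=
  strictly_characteristic_line_general p κ A σ hdim b hbsymm hbnd Bv hBv ψ hψ P hPdim hPψ hPiso
    hstrict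
end
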